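/- The wire gadget has exactly two gadget solutions: the single 2×2 block consisting of rows 0 and 1 (covering the bottom optional area and not the top one), and the single 2×2 block consisting of rows 1 and 2 (covering the top optional area and not the bottom one). -/

import Mathlib

/-- A cell of the integer grid. -/
abbrev Cell : Type := ℤ × ℤ

/-- Two cells are edge-adjacent. -/
def CellAdj (a b : Cell) : Prop :=
  (a.1 - b.1).natAbs + (a.2 - b.2).natAbs = 1

/-- A set of cells is edge-connected (within itself). -/
def ConnectedIn (S : Set Cell) : Prop :=
  ∀ a ∈ S, ∀ b ∈ S,
    Relation.ReflTransGen (fun x y : Cell => x ∈ S ∧ y ∈ S ∧ CellAdj x y) a b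

/-- A map of the grid composed of translations, rotations and reflections
    (an integer isometry given by an orthogonal integer matrix plus a translation). -/
def IsGridIsometry (f : Cell → Cell) : Prop :=
  ∃ a b c d e g : ℤ,
    a * a + b * b = 1 ∧ c * c + d * d = 1 ∧ a * c + b * d = 0 ∧
    ∀ p : Cell, f p = (a * p.1 + b * p.2 + e, c * p.1 + d * p.2 + g)

/-- Two sets of cells are congruent: equal up to translation, rotation and reflection. -/
def CongruentCells (A B : Set Cell) : Prop :=
  ∃ f : Cell → Cell, IsGridIsometry f ∧ f '' A = B

/-- A (coloring and clue assignment of a) Double Choco board: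
    each cell is white (`true`) or gray (`false`), and may carry a clue. -/
structure Board where
  white : Cell → Bool
  clue : Cell → Option ℕ

/-- The white cells of a set. -/
def Board.whitePart (bd : Board) (B : Set Cell) : Set Cell := {p ∈ B | bd.white p = true}

/-- The gray cells of a set. -/
def Board.grayPart (bd : Board) (B : Set Cell) : Set Cell := {p ∈ B | bd.white p = false}

/-- A valid Double Choco block: a finite edge-connected set of cells whose white part and
    gray part are nonempty, edge-connected, and congruent (hence of equal size), and such
    that any clue `n` carried by a cell of the block forces the white part and the gray
    part to have exactly `n` cells each. -/
def ValidBlock (bd : Board) (B : Set Cell) : Prop :=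
  B.Finite ∧ ConnectedIn B ∧
  (bd.whitePart B).Nonempty ∧ (bd.grayPart B).Nonempty ∧
  ConnectedIn (bd.whitePart B) ∧ ConnectedIn (bd.grayPart B) ∧
  CongruentCells (bd.whitePart B) (bd.grayPart B) ∧
  ∀ p ∈ B, ∀ n : ℕ, bd.clue p = some n →
    (bd.whitePart B).ncard = n ∧ (bd.grayPart B).ncard = n

/-- A partition of `area` into pairwise disjoint valid blocks. -/
def IsBlockPartition (bd : Board) (blocks : Set (Set Cell)) (area : Set Cell) : Prop :=
  (∀ B ∈ blocks, ValidBlock bd B) ∧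
  blocks.PairwiseDisjoint id ∧
  ⋃₀ blocks = area

/-- A gadget: a board together with a mandatory area and a collection of optional areas. -/
structure Gadget where
  board : Board
  mandatory : Set Cell
  optionals : Set (Set Cell)

/-- The entire area of a gadget. -/
def Gadget.area (G : Gadget) : Set Cell := G.mandatory ∪ ⋃₀ G.optionals

/-- A gadget solution: a partition into valid blocks of an assigned area containing the
    mandatory area, contained in the gadget, that fully covers or fully avoids each
    optional area. -/
def IsGadgetSolution (G : Gadget) (area : Set Cell) (blocks : Set (Set Cell)) : Prop :=
  G.mandatory ⊆ area ∧ area ⊆ G.area ∧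
  (∀ O ∈ G.optionals, O ⊆ area ∨ Disjoint O area) ∧
  IsBlockPartition G.board blocks area

/-- Row `j` of the (two cells wide) wire: cells `(0, j)` and `(1, j)`. -/
def wireRow (j : ℤ) : Set Cell := {((0 : ℤ), j), ((1 : ℤ), j)}

/-- The board of the wire gadget: column 0 is white, column 1 is gray,
    every cell carries the clue 2. -/
def wireBoard : Board where
  white := fun p => decide (p.1 = 0)
  clue := fun _ => some 2

/-- The wire gadget: cells `{0,1} × {0,1,2}`; the middle row is mandatory,
    the bottom and top rows are the two optional areas. -/
def wireGadget : Gadget where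
  board := wireBoard
  mandatory := wireRow 1
  optionals := {wireRow 0, wireRow 2}

/-! Every block of a wire solution has two white and two gray cells, while the whole wire has
only three of each. So no two disjoint blocks fit, and the block through the middle row is the
entire assigned area. That rules out the middle row alone (one white cell) and all three rows
(three white cells), leaving exactly the two 2×2 squares. -/

theorem Set.PairwiseDisjoint.inter_eq_of_ncard_lt_two_mul {α : Type*} {blocks : Set (Set α)}
    {B C : Set α} {k : ℕ} (hdisj : blocks.PairwiseDisjoint id) (hfin : (⋃₀ blocks ∩ C).Finite)
    (hk : ∀ B' ∈ blocks, (B' ∩ C).ncard = k) (hlt : (⋃₀ blocks ∩ C).ncard < 2 * k)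
    (hB : B ∈ blocks) : B ∩ C = ⋃₀ blocks ∩ C := by
  have hsub : ∀ {B'}, B' ∈ blocks → B' ∩ C ⊆ ⋃₀ blocks ∩ C := fun hB' =>
    Set.inter_subset_inter_left C (Set.subset_sUnion_of_mem hB')
  refine (hsub hB).antisymm fun p ⟨hp, hpC⟩ => ?_
  by_contra hpB
  obtain ⟨B', hB', hpB'⟩ := Set.mem_sUnion.mp hp
  have hne : B ≠ B' := by rintro rfl; exact hpB ⟨hpB', hpC⟩
  have hdisjC : Disjoint (B ∩ C) (B' ∩ C) :=
    (hdisj hB hB' hne).mono Set.inter_subset_left Set.inter_subset_left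
  have hle := Set.ncard_le_ncard (Set.union_subset (hsub hB) (hsub hB')) hfin
  rw [Set.ncard_union_eq hdisjC (hfin.subset (hsub hB)) (hfin.subset (hsub hB')),
    hk B hB, hk B' hB'] at hle
  omega

namespace Board

variable (bd : Board)

theorem whitePart_union_grayPart (B : Set Cell) : bd.whitePart B ∪ bd.grayPart B = B := by
  ext p
  cases h : bd.white p <;> simp [whitePart, grayPart, h]

theorem whitePart_mono {A B : Set Cell} (h : A ⊆ B) : bd.whitePart A ⊆ bd.whitePart B :=
  Set.inter_subset_inter_left _ h

theorem grayPart_mono {A B : Set Cell} (h : A ⊆ B) : bd.grayPart A ⊆ bd.grayPart B :=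
  Set.inter_subset_inter_left _ h

theorem whitePart_union (A B : Set Cell) :
    bd.whitePart (A ∪ B) = bd.whitePart A ∪ bd.whitePart B :=
  Set.union_inter_distrib_right _ _ _

theorem grayPart_union (A B : Set Cell) :
    bd.grayPart (A ∪ B) = bd.grayPart A ∪ bd.grayPart B :=
  Set.union_inter_distrib_right _ _ _

end Board

namespace ValidBlock

variable {bd : Board} {B : Set Cell}

theorem nonempty (h : ValidBlock bd B) : B.Nonempty :=
  h.2.2.1.mono Set.inter_subset_left

theorem ncard_parts_of_clue {n : ℕ} (hclue : ∀ p, bd.clue p = some n) (h : ValidBlock bd B) :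
    (bd.whitePart B).ncard = n ∧ (bd.grayPart B).ncard = n := by
  obtain ⟨-, -, ⟨p, hp, -⟩, -, -, -, -, hn⟩ := h
  exact hn p hp n (hclue p)

end ValidBlock

theorem isBlockPartition_singleton {bd : Board} {B : Set Cell} (h : ValidBlock bd B) :
    IsBlockPartition bd {B} B :=
  ⟨by simpa using h, Set.pairwiseDisjoint_singleton _ _, Set.sUnion_singleton B⟩

namespace IsBlockPartition

variable {bd : Board} {blocks : Set (Set Cell)} {area B : Set Cell}

theorem eq_area_of_ncard_lt {n : ℕ} (h : IsBlockPartition bd blocks area)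
    (hclue : ∀ p, bd.clue p = some n) (hfin : area.Finite)
    (hwhite : (bd.whitePart area).ncard < 2 * n) (hgray : (bd.grayPart area).ncard < 2 * n)
    (hB : B ∈ blocks) : B = area := by
  obtain ⟨hvalid, hdisj, hcover⟩ := h
  subst hcover
  have hwhite' := hdisj.inter_eq_of_ncard_lt_two_mul (hfin.inter_of_left _)
    (fun B' hB' => ((hvalid B' hB').ncard_parts_of_clue hclue).1) hwhite hB
  have hgray' := hdisj.inter_eq_of_ncard_lt_two_mul (hfin.inter_of_left _)
    (fun B' hB' => ((hvalid B' hB').ncard_parts_of_clue hclue).2) hgray hB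
  rw [← bd.whitePart_union_grayPart B, ← bd.whitePart_union_grayPart (⋃₀ blocks)]
  exact congrArg₂ (· ∪ ·) hwhite' hgray'

theorem eq_singleton_of_mem (h : IsBlockPartition bd blocks area) (hB : B ∈ blocks)
    (harea : B = area) : blocks = {area} := by
  subst harea
  refine Set.eq_singleton_iff_unique_mem.mpr ⟨hB, fun B' hB' => ?_⟩
  by_contra hne
  obtain ⟨p, hp⟩ := (h.1 B' hB').nonempty
  have hpB : p ∈ B := h.2.2 ▸ Set.mem_sUnion_of_mem hp hB'
  exact Set.disjoint_left.mp (h.2.1 hB' hB hne) hp hpB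

end IsBlockPartition

theorem mem_wireRow {p : Cell} {j : ℤ} : p ∈ wireRow j ↔ p = (0, j) ∨ p = (1, j) := Iff.rfl

theorem wireRow_finite (j : ℤ) : (wireRow j).Finite :=
  (Set.finite_singleton _).insert _

theorem wireRow_subset_or_disjoint (i j : ℤ) :
    wireRow i ⊆ wireRow j ∪ wireRow (j + 1) ∨
      Disjoint (wireRow i) (wireRow j ∪ wireRow (j + 1)) := by
  by_cases hi : i = j ∨ i = j + 1
  · rcases hi with rfl | rfl
    exacts [Or.inl Set.subset_union_left, Or.inl Set.subset_union_right]
  · refine Or.inr (Set.disjoint_left.mpr ?_)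
    simp only [mem_wireRow, Set.mem_union]
    rintro p (rfl | rfl) <;> simp only [Prod.mk.injEq] <;> omega

theorem wireBoard_clue (p : Cell) : wireBoard.clue p = some 2 := rfl

theorem wireBoard_whitePart_wireRow (j : ℤ) : wireBoard.whitePart (wireRow j) = {(0, j)} := by
  ext ⟨x, y⟩
  simp only [Board.whitePart, wireBoard, mem_wireRow, Set.mem_ofPred_eq, Set.mem_singleton_iff,
    Prod.mk.injEq, decide_eq_true_eq]
  omega

theorem wireBoard_grayPart_wireRow (j : ℤ) : wireBoard.grayPart (wireRow j) = {(1, j)} := by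
  ext ⟨x, y⟩
  simp only [Board.grayPart, wireBoard, mem_wireRow, Set.mem_ofPred_eq, Set.mem_singleton_iff,
    Prod.mk.injEq, decide_eq_false_iff_not]
  omega

theorem wireGadget_area : wireGadget.area = wireRow 0 ∪ wireRow 1 ∪ wireRow 2 := by
  simp [Gadget.area, wireGadget, Set.union_comm, Set.union_left_comm]

theorem connectedIn_singleton (a : Cell) : ConnectedIn {a} := by
  rintro x rfl y rfl
  exact .refl

theorem ConnectedIn.union {A B : Set Cell} (hA : ConnectedIn A) (hB : ConnectedIn B)
    {a b : Cell} (ha : a ∈ A) (hb : b ∈ B) (hab : CellAdj a b) : ConnectedIn (A ∪ B) := by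
  set R : Cell → Cell → Prop := fun x y => x ∈ A ∪ B ∧ y ∈ A ∪ B ∧ CellAdj x y
  have hba : CellAdj b a := by unfold CellAdj at hab ⊢; omega
  have liftA : ∀ x ∈ A, ∀ y ∈ A, Relation.ReflTransGen R x y := fun x hx y hy =>
    Relation.ReflTransGen.mono (fun _ _ ⟨hu, hv, h⟩ => ⟨.inl hu, .inl hv, h⟩) x y (hA x hx y hy)
  have liftB : ∀ x ∈ B, ∀ y ∈ B, Relation.ReflTransGen R x y := fun x hx y hy =>
    Relation.ReflTransGen.mono (fun _ _ ⟨hu, hv, h⟩ => ⟨.inr hu, .inr hv, h⟩) x y (hB x hx y hy)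
  have to_a : ∀ x ∈ A ∪ B, Relation.ReflTransGen R x a := by
    rintro x (hx | hx)
    exacts [liftA x hx a ha, (liftB x hx b hb).tail ⟨.inr hb, .inl ha, hba⟩]
  have from_a : ∀ y ∈ A ∪ B, Relation.ReflTransGen R a y := by
    rintro y (hy | hy)
    exacts [liftA a ha y hy, (liftB b hb y hy).head ⟨.inl ha, .inr hb, hab⟩]
  exact fun x hx y hy => (to_a x hx).trans (from_a y hy)

theorem connectedIn_pair_of_adj {a b : Cell} (h : CellAdj a b) : ConnectedIn ({a} ∪ {b}) :=
  (connectedIn_singleton a).union (connectedIn_singleton b) rfl rfl h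

theorem validBlock_wireRow_union_succ (j : ℤ) :
    ValidBlock wireBoard (wireRow j ∪ wireRow (j + 1)) := by
  have hwhite : wireBoard.whitePart (wireRow j ∪ wireRow (j + 1)) = {(0, j)} ∪ {(0, j + 1)} := by
    rw [Board.whitePart_union, wireBoard_whitePart_wireRow, wireBoard_whitePart_wireRow]
  have hgray : wireBoard.grayPart (wireRow j ∪ wireRow (j + 1)) = {(1, j)} ∪ {(1, j + 1)} := by
    rw [Board.grayPart_union, wireBoard_grayPart_wireRow, wireBoard_grayPart_wireRow]
  have hrow : ∀ i, ConnectedIn (wireRow i) := fun i =>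
    connectedIn_pair_of_adj (a := (0, i)) (b := (1, i)) (by simp [CellAdj])
  unfold ValidBlock
  rw [hwhite, hgray]
  refine ⟨(wireRow_finite j).union (wireRow_finite (j + 1)),
    (hrow j).union (hrow (j + 1)) (a := (0, j)) (b := (0, j + 1)) (.inl rfl) (.inl rfl)
      (by simp [CellAdj]), ?_, ?_, ?_, ?_, ?_, ?_⟩
  · exact ⟨(0, j), .inl rfl⟩
  · exact ⟨(1, j), .inl rfl⟩
  · exact connectedIn_pair_of_adj (by simp [CellAdj])
  · exact connectedIn_pair_of_adj (by simp [CellAdj])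
  · refine ⟨fun p => (p.1 + 1, p.2), ⟨1, 0, 0, 1, 1, 0, by simp⟩, ?_⟩
    simp [Set.image_insert_eq]
  · rintro - - n ⟨⟩
    simp

theorem IsGadgetSolution.wireGadget_area_cases {area : Set Cell} {blocks : Set (Set Cell)}
    (h : IsGadgetSolution wireGadget area blocks) :
    area = wireRow 1 ∨ area = wireRow 0 ∪ wireRow 1 ∨ area = wireRow 1 ∪ wireRow 2 ∨
      area = wireRow 0 ∪ wireRow 1 ∪ wireRow 2 := by
  obtain ⟨hM, hA, hopt, -⟩ := h
  rw [wireGadget_area] at hA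
  change wireRow 1 ⊆ area at hM
  rcases hopt _ (.inl rfl) with h0 | h0 <;> rcases hopt _ (.inr rfl) with h2 | h2
  · exact .inr <| .inr <| .inr <| hA.antisymm (Set.union_subset (Set.union_subset h0 hM) h2)
  · exact .inr <| .inl <| (Disjoint.subset_left_of_subset_union hA h2.symm).antisymm
      (Set.union_subset h0 hM)
  · rw [Set.union_assoc] at hA
    exact .inr <| .inr <| .inl <| (Disjoint.subset_right_of_subset_union hA h0.symm).antisymm
      (Set.union_subset hM h2)
  · rw [Set.union_assoc] at hA
    exact .inl <| (Disjoint.subset_left_of_subset_union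
      (Disjoint.subset_right_of_subset_union hA h0.symm) h2.symm).antisymm hM

theorem wireGadget_area_finite : wireGadget.area.Finite := by
  rw [wireGadget_area]
  exact ((wireRow_finite 0).union (wireRow_finite 1)).union (wireRow_finite 2)

theorem ncard_wireBoard_parts_le {area : Set Cell} (hA : area ⊆ wireGadget.area) :
    (wireBoard.whitePart area).ncard ≤ 3 ∧ (wireBoard.grayPart area).ncard ≤ 3 := by
  have hfin := wireGadget_area_finite
  refine ⟨(Set.ncard_le_ncard (wireBoard.whitePart_mono hA) (hfin.inter_of_left _)).trans ?_,
    (Set.ncard_le_ncard (wireBoard.grayPart_mono hA) (hfin.inter_of_left _)).trans ?_⟩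
  all_goals
    simp only [wireGadget_area, Board.whitePart_union, Board.grayPart_union,
      wireBoard_whitePart_wireRow, wireBoard_grayPart_wireRow, Set.union_assoc, Set.singleton_union]
    exact (Set.ncard_insert_le _ _).trans (by grw [Set.ncard_insert_le, Set.ncard_singleton])

theorem isGadgetSolution_wireGadget_two_rows {j : ℤ} (hj : j = 0 ∨ j = 1) :
    IsGadgetSolution wireGadget (wireRow j ∪ wireRow (j + 1)) {wireRow j ∪ wireRow (j + 1)} := by
  refine ⟨?_, ?_, ?_, isBlockPartition_singleton (validBlock_wireRow_union_succ j)⟩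
  · rcases hj with rfl | rfl
    exacts [Set.subset_union_right, Set.subset_union_left]
  · rw [wireGadget_area]
    rcases hj with rfl | rfl
    · exact Set.subset_union_left
    · rw [Set.union_assoc]
      exact Set.subset_union_right
  · rintro O (rfl | rfl) <;> exact wireRow_subset_or_disjoint _ _

/-- The wire gadget has exactly two gadget solutions: the single 2×2 block consisting of
    rows 0 and 1 (covering the bottom optional area and not the top one), and the single
    2×2 block consisting of rows 1 and 2 (covering the top optional area and not the
    bottom one). -/
theorem wire_profile_table_sufficient (area : Set Cell) (blocks : Set (Set Cell)) :
    IsGadgetSolution wireGadget area blocks ↔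
      (area = wireRow 0 ∪ wireRow 1 ∧ blocks = {wireRow 0 ∪ wireRow 1}) ∨
      (area = wireRow 1 ∪ wireRow 2 ∧ blocks = {wireRow 1 ∪ wireRow 2}) := by
  constructor
  · intro hsol
    have hpart : IsBlockPartition wireBoard blocks area := hsol.2.2.2
    obtain ⟨B, hB, -⟩ : ((0 : ℤ), (1 : ℤ)) ∈ ⋃₀ blocks := hpart.2.2 ▸ hsol.1 (.inl rfl)
    obtain ⟨hwhite, hgray⟩ := ncard_wireBoard_parts_le hsol.2.1
    have hBarea : B = area := hpart.eq_area_of_ncard_lt wireBoard_clue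
      (wireGadget_area_finite.subset hsol.2.1) (by omega) (by omega) hB
    have hcard : (wireBoard.whitePart area).ncard = 2 :=
      hBarea ▸ ((hpart.1 B hB).ncard_parts_of_clue wireBoard_clue).1
    have hblocks := hpart.eq_singleton_of_mem hB hBarea
    rcases hsol.wireGadget_area_cases with rfl | rfl | rfl | rfl
    · simp [wireBoard_whitePart_wireRow] at hcard
    · exact .inl ⟨rfl, hblocks⟩
    · exact .inr ⟨rfl, hblocks⟩
    · simp [Board.whitePart_union, wireBoard_whitePart_wireRow, Set.union_assoc,
        Set.ncard_insert_of_notMem] at hcard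
  · rintro (⟨rfl, rfl⟩ | ⟨rfl, rfl⟩)
    exacts [isGadgetSolution_wireGadget_two_rows (.inl rfl),
      isGadgetSolution_wireGadget_two_rows (.inr rfl)]
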